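/- Let A be an n×n max-plus matrix with finite spectral radius λ, let B be an n×n matrix with Tr(B) ≤ 0, and let g be a vector. Define θ = λ ⊕ max_{1≤k≤n−1} max_{1≤i_1+⋯+i_k≤n−k} (1/k)·tr(A B^{i_1} ⋯ A B^{i_k}). Then θ is the minimum of x⁻ ⊗ A ⊗ x over all regular vectors x satisfying B ⊗ x ⊕ g ≤ x, and the minimum is attained exactly at the vectors x = ((-θ)⊗A ⊕ B)* ⊗ u with u regular and u ≥ g. -/

import Mathlib

/-!
Write `S = (-θ) ⊗ A ⊕ B`. For a regular `x`, `x⁻ ⊗ A ⊗ x ≤ c` means `A ⊗ x ≤ c ⊗ x`; together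
with `B ⊗ x ≤ x` this bounds every product `A B^{i₁} ⋯ A B^{iₖ}` (and `Aᵐ`) along `x` by `c^k`, so
its trace is at most `k c` and `θ ≤ c`: this is the lower bound. Expanding `S^ℓ` into words in
`A` and `B` and rotating them under the trace, the definition of `θ` gives `Tr(S) ≤ 0`. Then a
walk of length `n` contains a cycle of nonpositive weight, so `S ⊗ S* ≤ S*`. Hence `x = S* ⊗ u`
satisfies `S ⊗ x ≤ x`, i.e. `B ⊗ x ≤ x` and `x⁻ ⊗ A ⊗ x ≤ θ`; conversely an optimal feasible `x`
satisfies `S ⊗ x ≤ x` and therefore `x = S* ⊗ x`.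
-/

noncomputable section

/-- Max-plus carrier: ℝ ∪ {-∞}. Addition ⊕ is `max`, multiplication ⊗ is `+`
(with ⊥ = -∞ absorbing), zero is ⊥ and unit is `(0 : ℝ)`. -/
abbrev MP := WithBot ℝ

/-- Multiplicative conjugate: negate a finite value, send -∞ to -∞. -/
def mpInv (a : MP) : MP := a.map (fun t => -t)

/-- Max-plus matrix product. -/
def mpMulM {l m n : ℕ} (A : Fin l → Fin m → MP) (B : Fin m → Fin n → MP) :
    Fin l → Fin n → MP := fun i j => Finset.univ.sup fun k => A i k + B k j

/-- Max-plus matrix-vector product. -/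
def mpMulV {m n : ℕ} (A : Fin m → Fin n → MP) (x : Fin n → MP) : Fin m → MP :=
  fun i => Finset.univ.sup fun j => A i j + x j

/-- Max-plus identity matrix. -/
def mpId {n : ℕ} : Fin n → Fin n → MP := fun i j => if i = j then ((0:ℝ) : MP) else ⊥

/-- Max-plus matrix power. -/
def mpPow {n : ℕ} (A : Fin n → Fin n → MP) : ℕ → (Fin n → Fin n → MP)
  | 0 => mpId
  | k+1 => mpMulM (mpPow A k) A

/-- Max-plus trace. -/
def mpTr {n : ℕ} (A : Fin n → Fin n → MP) : MP := Finset.univ.sup fun i => A i i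

/-- Tr(A) = tr A ⊕ tr A² ⊕ ⋯ ⊕ tr Aⁿ. -/
def mpTR {n : ℕ} (A : Fin n → Fin n → MP) : MP :=
  (Finset.Icc 1 n).sup fun m => mpTr (mpPow A m)

/-- Kleene star A* = I ⊕ A ⊕ ⋯ ⊕ A^{n-1}. -/
def mpStar {n : ℕ} (A : Fin n → Fin n → MP) : Fin n → Fin n → MP :=
  fun i j => (Finset.range n).sup fun k => mpPow A k i j

/-- Max-plus spectral radius λ = max_{1≤m≤n} tr(A^m)^{1/m}. -/
def mpLam {n : ℕ} (A : Fin n → Fin n → MP) : MP :=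
  (Finset.Icc 1 n).sup fun m => (mpTr (mpPow A m)).map (fun t => t / (m : ℝ))

/-- The alternating product B^{i₀} A B^{i₁} A ⋯ A B^{iₖ}. -/
def mpChain {n : ℕ} (A B : Fin n → Fin n → MP) : (k : ℕ) → (Fin (k+1) → ℕ) → (Fin n → Fin n → MP)
  | 0, i => mpPow B (i 0)
  | (k+1), i => mpMulM (mpChain A B k (fun j => i j.castSucc)) (mpMulM A (mpPow B (i (Fin.last (k+1)))))


namespace MP

lemma sup_add {α : Type*} (s : Finset α) (f : α → MP) (a : MP) :
    s.sup f + a = s.sup fun x => f x + a :=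
  Finset.apply_sup_eq_sup_comp (· + a) (fun x y => (max_add_add_right x y a).symm)
    (WithBot.bot_add a)

lemma add_sup {α : Type*} (s : Finset α) (f : α → MP) (a : MP) :
    a + s.sup f = s.sup fun x => a + f x :=
  Finset.apply_sup_eq_sup_comp (a + ·) (fun x y => (max_add_add_left a x y).symm)
    (WithBot.add_bot a)

lemma coe_add_le_iff {r : ℝ} {a b : MP} : (r : MP) + a ≤ b ↔ a ≤ ((-r : ℝ) : MP) + b := by
  rw [← WithBot.add_le_add_iff_left (WithBot.coe_ne_bot (a := -r)), ← add_assoc,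
    ← WithBot.coe_add, neg_add_cancel, WithBot.coe_zero, zero_add]

end MP

section Algebra

variable {n : ℕ}

lemma le_mpMulM {l m p : ℕ} (P : Fin l → Fin m → MP) (Q : Fin m → Fin p → MP) (i k j) :
    P i k + Q k j ≤ mpMulM P Q i j :=
  Finset.le_sup (f := fun k => P i k + Q k j) (Finset.mem_univ k)

lemma exists_mpMulM_eq (P Q : Fin n → Fin n → MP) (i j : Fin n) :
    ∃ k, mpMulM P Q i j = P i k + Q k j :=
  let ⟨k, _, hk⟩ :=
    Finset.exists_mem_eq_sup Finset.univ ⟨i, Finset.mem_univ i⟩ fun k => P i k + Q k j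
  ⟨k, hk⟩

lemma mpMulM_assoc {l m p q : ℕ} (P : Fin l → Fin m → MP) (Q : Fin m → Fin p → MP)
    (R : Fin p → Fin q → MP) : mpMulM (mpMulM P Q) R = mpMulM P (mpMulM Q R) := by
  funext i j
  simp only [mpMulM, MP.sup_add, MP.add_sup, add_assoc]
  exact Finset.sup_comm _ _ _

lemma mpId_mpMulM {m : ℕ} (M : Fin n → Fin m → MP) : mpMulM mpId M = M := by
  funext i j
  refine le_antisymm (Finset.sup_le fun k _ => ?_) ?_
  · by_cases h : i = k <;> simp [mpId, h]
  · simpa [mpId] using le_mpMulM mpId M i i j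

lemma mpMulM_mpId {m : ℕ} (M : Fin m → Fin n → MP) : mpMulM M mpId = M := by
  funext i j
  refine le_antisymm (Finset.sup_le fun k _ => ?_) ?_
  · by_cases h : k = j <;> simp [mpId, h]
  · simpa [mpId] using le_mpMulM M mpId i j j

lemma mpPow_one (M : Fin n → Fin n → MP) : mpPow M 1 = M :=
  mpId_mpMulM M

lemma mpPow_add (M : Fin n → Fin n → MP) (a b : ℕ) :
    mpPow M (a + b) = mpMulM (mpPow M a) (mpPow M b) := by
  induction b with
  | zero => exact (mpMulM_mpId _).symm
  | succ b ih => rw [← add_assoc, mpPow, ih, mpMulM_assoc]; rfl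

lemma mpPow_succ' (M : Fin n → Fin n → MP) (m : ℕ) :
    mpPow M (m + 1) = mpMulM M (mpPow M m) := by
  rw [add_comm, mpPow_add, mpPow_one]

lemma mpTr_mpMulM_comm {m : ℕ} (P : Fin n → Fin m → MP) (Q : Fin m → Fin n → MP) :
    mpTr (mpMulM P Q) = mpTr (mpMulM Q P) := by
  simp only [mpTr, mpMulM]
  rw [Finset.sup_comm]
  simp only [add_comm]

lemma mpMulV_mpMulM {l m p : ℕ} (P : Fin l → Fin m → MP) (Q : Fin m → Fin p → MP)
    (x : Fin p → MP) : mpMulV (mpMulM P Q) x = mpMulV P (mpMulV Q x) := by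
  funext i
  simp only [mpMulV, mpMulM, MP.sup_add, MP.add_sup, add_assoc]
  exact Finset.sup_comm _ _ _

lemma mpMulV_mono {m : ℕ} {P Q : Fin n → Fin m → MP} (h : ∀ i j, P i j ≤ Q i j)
    (x : Fin m → MP) (i : Fin n) : mpMulV P x i ≤ mpMulV Q x i :=
  Finset.sup_mono_fun fun j _ => by gcongr; exact h i j

end Algebra

section Subeigenvector

variable {n : ℕ}

def IsSubeigenvector (M : Fin n → Fin n → MP) (c : ℝ) (x : Fin n → ℝ) : Prop :=
  ∀ i j, M i j + (x j : MP) ≤ (c : MP) + (x i : MP)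

/-- `x⁻ ⊗ A ⊗ x`. -/
def mpConjForm (A : Fin n → Fin n → MP) (x : Fin n → ℝ) : MP :=
  Finset.univ.sup fun i => Finset.univ.sup fun j => ((-(x i) : ℝ) : MP) + A i j + (x j : MP)

def mpPencil (A B : Fin n → Fin n → MP) (θ : ℝ) : Fin n → Fin n → MP :=
  fun p q => max (((-θ : ℝ) : MP) + A p q) (B p q)

variable {M A B : Fin n → Fin n → MP} {c : ℝ} {x : Fin n → ℝ}

lemma isSubeigenvector_iff_mpMulV_le :
    IsSubeigenvector M c x ↔ ∀ i, mpMulV M (fun j => (x j : MP)) i ≤ (c : MP) + (x i : MP) := by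
  simp only [IsSubeigenvector, mpMulV, Finset.sup_le_iff, Finset.mem_univ, true_implies]

lemma mpConjForm_le_iff : mpConjForm A x ≤ c ↔ IsSubeigenvector A c x := by
  simp only [mpConjForm, Finset.sup_le_iff, Finset.mem_univ, true_implies, IsSubeigenvector,
    add_assoc, MP.coe_add_le_iff, neg_neg, add_comm (c : MP)]

lemma isSubeigenvector_mpPencil_iff {θ : ℝ} :
    IsSubeigenvector (mpPencil A B θ) 0 x ↔ IsSubeigenvector A θ x ∧ IsSubeigenvector B 0 x := by
  simp only [IsSubeigenvector, mpPencil, ← max_add_add_right, max_le_iff, forall_and, add_assoc,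
    MP.coe_add_le_iff, neg_neg, WithBot.coe_zero, zero_add]

lemma max_mpMulV_le_iff {g : Fin n → MP} :
    (∀ i, max (mpMulV B (fun j => (x j : MP)) i) (g i) ≤ (x i : MP)) ↔
      IsSubeigenvector B 0 x ∧ ∀ i, g i ≤ (x i : MP) := by
  simp [isSubeigenvector_iff_mpMulV_le, forall_and]

lemma isSubeigenvector_mpId (x : Fin n → ℝ) : IsSubeigenvector mpId 0 x := by
  intro i j
  by_cases h : i = j <;> simp [mpId, h]

lemma IsSubeigenvector.mpMulM {P Q : Fin n → Fin n → MP} {d : ℝ} (hP : IsSubeigenvector P c x)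
    (hQ : IsSubeigenvector Q d x) : IsSubeigenvector (mpMulM P Q) (c + d) x := by
  intro i j
  rw [_root_.mpMulM, MP.sup_add]
  refine Finset.sup_le fun k _ => ?_
  calc P i k + Q k j + (x j : MP) ≤ P i k + ((d : MP) + (x k : MP)) := by
        rw [add_assoc]; exact add_le_add_right (hQ k j) _
    _ = P i k + (x k : MP) + (d : MP) := by abel
    _ ≤ (c : MP) + (x i : MP) + (d : MP) := add_le_add_left (hP i k) _
    _ = ((c + d : ℝ) : MP) + (x i : MP) := by push_cast; abel

lemma IsSubeigenvector.mpPow (h : IsSubeigenvector M c x) (m : ℕ) :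
    IsSubeigenvector (mpPow M m) (m * c) x := by
  induction m with
  | zero =>
    show IsSubeigenvector mpId _ x
    simpa using isSubeigenvector_mpId x
  | succ m ih =>
    show IsSubeigenvector (_root_.mpMulM (_root_.mpPow M m) M) _ x
    simpa [add_mul] using ih.mpMulM h

lemma IsSubeigenvector.mpChain (hA : IsSubeigenvector A c x) (hB : IsSubeigenvector B 0 x) :
    ∀ (k : ℕ) (i : Fin (k + 1) → ℕ), IsSubeigenvector (mpChain A B k i) (k * c) x
  | 0, i => by simpa [_root_.mpChain] using hB.mpPow (i 0)
  | k + 1, i => by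
    show IsSubeigenvector (_root_.mpMulM _ _) _ x
    simpa [add_mul] using (hA.mpChain hB k _).mpMulM (hA.mpMulM (hB.mpPow _))

lemma IsSubeigenvector.mpTr_le (h : IsSubeigenvector M c x) : mpTr M ≤ c :=
  Finset.sup_le fun i _ => (WithBot.add_le_add_iff_right WithBot.coe_ne_bot).1 (h i i)

lemma IsSubeigenvector.mpStar (h : IsSubeigenvector M 0 x) : IsSubeigenvector (mpStar M) 0 x := by
  intro i j
  rw [_root_.mpStar, MP.sup_add]
  exact Finset.sup_le fun m _ => by simpa using h.mpPow m i j

end Subeigenvector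

section KleeneStar

variable {n : ℕ}

lemma sum_Ico_le_mpPow (M : Fin n → Fin n → MP) (u : ℕ → Fin n) {a b : ℕ} (hab : a ≤ b) :
    ∑ t ∈ Finset.Ico a b, M (u t) (u (t + 1)) ≤ mpPow M (b - a) (u a) (u b) := by
  induction b, hab using Nat.le_induction with
  | base => simp [mpPow, mpId]
  | succ b hab ih =>
    rw [Finset.sum_Ico_succ_top hab, Nat.sub_add_comm hab]
    exact (add_le_add_left ih _).trans (le_mpMulM _ _ _ (u b) _)

lemma exists_walk_eq_mpPow (M : Fin n → Fin n → MP) (m : ℕ) (i j : Fin n) :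
    ∃ u : ℕ → Fin n, u 0 = i ∧ u (m + 1) = j ∧
      mpPow M (m + 1) i j = ∑ t ∈ Finset.range (m + 1), M (u t) (u (t + 1)) := by
  induction m generalizing j with
  | zero => exact ⟨fun t => if t = 0 then i else j, rfl, rfl, by simp [mpPow_one]⟩
  | succ m ih =>
    obtain ⟨r, hr⟩ := exists_mpMulM_eq (mpPow M (m + 1)) M i j
    obtain ⟨u, hu0, hur, hw⟩ := ih r
    refine ⟨Function.update u (m + 2) j, by simp [hu0], by simp, ?_⟩
    rw [mpPow, hr, hw, Finset.sum_range_succ _ (m + 1)]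
    congr 1
    · refine Finset.sum_congr rfl fun t ht => ?_
      have ht := Finset.mem_range.1 ht
      rw [Function.update_of_ne (by omega), Function.update_of_ne (by omega)]
    · rw [Function.update_of_ne (by omega), Function.update_self, hur]

lemma mpId_le_mpStar (S : Fin n → Fin n → MP) (i j : Fin n) : mpId i j ≤ mpStar S i j :=
  Finset.le_sup (f := fun k => mpPow S k i j) (Finset.mem_range.2 i.pos)

/-- A walk of length `n` repeats a vertex; cutting out the cycle, of nonpositive weight,
leaves a shorter walk. -/
lemma mpPow_le_mpStar (S : Fin n → Fin n → MP) (hS : mpTR S ≤ ((0 : ℝ) : MP)) (i j : Fin n) :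
    mpPow S n i j ≤ mpStar S i j := by
  obtain ⟨m, rfl⟩ := Nat.exists_eq_add_one_of_ne_zero i.pos.ne'
  obtain ⟨u, rfl, rfl, hw⟩ := exists_walk_eq_mpPow S m i j
  obtain ⟨p, q, hpq, hq, hupq⟩ : ∃ p q, p < q ∧ q ≤ m + 1 ∧ u p = u q := by
    obtain ⟨a, b, hab, heq⟩ :=
      Fintype.exists_ne_map_eq_of_card_lt (fun t : Fin (m + 2) => u t) (by simp)
    rcases Fin.lt_or_lt_of_ne hab with h | h
    · exact ⟨a, b, h, by omega, heq⟩
    · exact ⟨b, a, h, by omega, heq.symm⟩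
  have hcycle : ∑ t ∈ Finset.Ico p q, S (u t) (u (t + 1)) ≤ ((0 : ℝ) : MP) := by
    refine (sum_Ico_le_mpPow S u hpq.le).trans ?_
    rw [← hupq]
    exact (Finset.le_sup (f := fun k => mpPow S (q - p) k k) (Finset.mem_univ _)).trans
      ((Finset.le_sup (f := fun l => mpTr (mpPow S l))
        (Finset.mem_Icc.2 ⟨by omega, by omega⟩)).trans hS)
  calc mpPow S (m + 1) (u 0) (u (m + 1))
      = ∑ t ∈ Finset.Ico 0 p, S (u t) (u (t + 1)) + ∑ t ∈ Finset.Ico p q, S (u t) (u (t + 1))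
          + ∑ t ∈ Finset.Ico q (m + 1), S (u t) (u (t + 1)) := by
        rw [Finset.sum_Ico_consecutive _ (Nat.zero_le p) hpq.le,
          Finset.sum_Ico_consecutive _ (Nat.zero_le q) hq, hw, Finset.range_eq_Ico]
    _ ≤ mpPow S (p - 0) (u 0) (u p) + ((0 : ℝ) : MP) + mpPow S (m + 1 - q) (u q) (u (m + 1)) := by
        gcongr
        · exact sum_Ico_le_mpPow S u (Nat.zero_le p)
        · exact sum_Ico_le_mpPow S u hq
    _ ≤ mpPow S (p + (m + 1 - q)) (u 0) (u (m + 1)) := by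
        rw [WithBot.coe_zero, add_zero, Nat.sub_zero, hupq, mpPow_add]
        exact le_mpMulM _ _ _ _ _
    _ ≤ mpStar S (u 0) (u (m + 1)) :=
        Finset.le_sup (f := fun k => mpPow S k _ _) (Finset.mem_range.2 (by omega))

lemma mpMulM_mpStar_le (S : Fin n → Fin n → MP) (hS : mpTR S ≤ ((0 : ℝ) : MP)) (i j : Fin n) :
    mpMulM S (mpStar S) i j ≤ mpStar S i j := by
  refine Finset.sup_le fun k _ => ?_
  rw [mpStar, MP.add_sup]
  refine Finset.sup_le fun l hl => ?_
  have hstep : S i k + mpPow S l k j ≤ mpPow S (l + 1) i j := by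
    rw [mpPow_succ']; exact le_mpMulM _ _ _ _ _
  rcases (Nat.succ_le_of_lt (Finset.mem_range.1 hl)).eq_or_lt with h | h
  · exact hstep.trans (h ▸ mpPow_le_mpStar S hS i j)
  · exact hstep.trans (Finset.le_sup (f := fun k => mpPow S k i j) (Finset.mem_range.2 h))

lemma le_mpMulV_mpStar (S : Fin n → Fin n → MP) (u : Fin n → MP) (i : Fin n) :
    u i ≤ mpMulV (mpStar S) u i :=
  calc u i = mpId i i + u i := by simp [mpId]
    _ ≤ mpMulV (mpStar S) u i :=
      (add_le_add_left (mpId_le_mpStar S i i) _).trans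
        (Finset.le_sup (f := fun j => mpStar S i j + u j) (Finset.mem_univ i))

lemma mpMulV_mpStar_eq {S : Fin n → Fin n → MP} {x : Fin n → ℝ} (h : IsSubeigenvector S 0 x)
    (i : Fin n) : mpMulV (mpStar S) (fun j => (x j : MP)) i = x i :=
  le_antisymm (by simpa using isSubeigenvector_iff_mpMulV_le.1 h.mpStar i)
    (le_mpMulV_mpStar S (fun j => (x j : MP)) i)

lemma isSubeigenvector_of_eq_mpMulV_mpStar {S : Fin n → Fin n → MP}
    (hS : mpTR S ≤ ((0 : ℝ) : MP)) {u : Fin n → MP} {x : Fin n → ℝ}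
    (hx : ∀ i, (x i : MP) = mpMulV (mpStar S) u i) : IsSubeigenvector S 0 x := by
  have hx' : (fun j => (x j : MP)) = mpMulV (mpStar S) u := funext hx
  refine isSubeigenvector_iff_mpMulV_le.2 fun i => ?_
  rw [WithBot.coe_zero, zero_add, hx', ← mpMulV_mpMulM]
  exact (mpMulV_mono (mpMulM_mpStar_le S hS) u i).trans (hx i).ge

end KleeneStar

section Pencil

variable {n : ℕ} (A B : Fin n → Fin n → MP)

lemma mpChain_cons_snoc {k : ℕ} (a : Fin k → ℕ) (b : ℕ) :
    mpChain A B (k + 1) (Fin.cons 0 (Fin.snoc a b)) =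
      mpMulM (mpChain A B k (Fin.cons 0 a)) (mpMulM A (mpPow B b)) := by
  rw [Fin.cons_snoc_eq_snoc_cons]
  simp only [mpChain, Fin.snoc_castSucc, Fin.snoc_last]

lemma mpChain_cons_snoc_mul_mpPow {k : ℕ} (a : Fin k → ℕ) (b j : ℕ) :
    mpMulM (mpChain A B (k + 1) (Fin.cons 0 (Fin.snoc a b))) (mpPow B j) =
      mpChain A B (k + 1) (Fin.cons 0 (Fin.snoc a (b + j))) := by
  rw [mpChain_cons_snoc, mpChain_cons_snoc, mpMulM_assoc, mpMulM_assoc, mpPow_add]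

lemma mpChain_zero_cons (a : Fin 0 → ℕ) : mpChain A B 0 (Fin.cons 0 a) = mpId :=
  rfl

lemma mpChain_of_forall_eq_zero :
    ∀ (k : ℕ) (i : Fin (k + 1) → ℕ), (∀ s, i s = 0) → mpChain A B k i = mpPow A k
  | 0, i, hi => by rw [mpChain, hi]; rfl
  | k + 1, i, hi => by
    rw [mpChain, mpChain_of_forall_eq_zero k _ fun s => hi _, hi]
    exact congrArg _ (mpMulM_mpId A)

/-- `mpMulM (mpPow B j) (mpChain A B k (Fin.cons 0 a))` is the word `B^j A B^{a₁} ⋯ A B^{aₖ}`. -/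
lemma exists_word_ge_mpPow_mpPencil (θ : ℝ) (m : ℕ) (p q : Fin n) :
    ∃ (j k : ℕ) (a : Fin k → ℕ), j + k + ∑ s, a s = m ∧
      mpPow (mpPencil A B θ) m p q ≤
        ((-(k * θ) : ℝ) : MP) + mpMulM (mpPow B j) (mpChain A B k (Fin.cons 0 a)) p q := by
  induction m generalizing q with
  | zero => exact ⟨0, 0, Fin.elim0, rfl, by simp [mpChain, mpPow, mpMulM_mpId]⟩
  | succ m ih =>
    obtain ⟨r, hr⟩ := exists_mpMulM_eq (mpPow (mpPencil A B θ) m) (mpPencil A B θ) p q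
    obtain ⟨j, k, a, hsum, hle⟩ := ih r
    have hstep : mpPow (mpPencil A B θ) (m + 1) p q ≤ ((-(k * θ) : ℝ) : MP) +
        mpMulM (mpPow B j) (mpChain A B k (Fin.cons 0 a)) p r + mpPencil A B θ r q := by
      rw [mpPow, hr]; exact add_le_add_left hle _
    rcases max_choice (((-θ : ℝ) : MP) + A r q) (B r q) with hS | hS <;>
      rw [mpPencil, hS] at hstep
    · refine ⟨j, k + 1, Fin.snoc a 0, by simp [Fin.sum_univ_castSucc]; omega, ?_⟩
      rw [mpChain_cons_snoc, mpPow, mpMulM_mpId, ← mpMulM_assoc]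
      refine hstep.trans (le_of_eq_of_le ?_ (add_le_add_right (le_mpMulM _ _ _ r _) _))
      rw [show -((k + 1 : ℕ) * θ) = -(k * θ) + -θ by push_cast; ring, WithBot.coe_add]
      abel
    · cases k with
      | zero =>
        refine ⟨j + 1, 0, Fin.elim0, by simpa using hsum, ?_⟩
        rw [mpChain_zero_cons, mpMulM_mpId] at hstep ⊢
        rw [add_assoc] at hstep
        exact hstep.trans (add_le_add_right (le_mpMulM (mpPow B j) B p r q) _)
      | succ k =>
        obtain ⟨a, b, rfl⟩ : ∃ a' b, a = Fin.snoc a' b :=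
          ⟨Fin.init a, a (Fin.last k), (Fin.snoc_init_self a).symm⟩
        refine ⟨j, k + 1, Fin.snoc a (b + 1), by simp [Fin.sum_univ_castSucc] at hsum ⊢; omega, ?_⟩
        rw [← mpChain_cons_snoc_mul_mpPow A B a b 1, mpPow_one, ← mpMulM_assoc]
        rw [add_assoc] at hstep
        exact hstep.trans (add_le_add_right (le_mpMulM _ B p r q) _)

/-- Each word of `((-θ) ⊗ A ⊕ B)^ℓ` other than `B^ℓ` is rotated under the trace so that it
starts with `A`. -/
lemma mpTR_mpPencil_le_zero {θ : ℝ} (hB : mpTR B ≤ ((0 : ℝ) : MP))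
    (hchain : ∀ (k : ℕ) (a : Fin k → ℕ), 1 ≤ k → k + ∑ s, a s ≤ n →
      mpTr (mpChain A B k (Fin.cons 0 a)) ≤ ((k * θ : ℝ) : MP)) :
    mpTR (mpPencil A B θ) ≤ ((0 : ℝ) : MP) := by
  refine Finset.sup_le fun l hl => Finset.sup_le fun p _ => ?_
  obtain ⟨hl1, hln⟩ := Finset.mem_Icc.1 hl
  obtain ⟨j, k, a, hsum, hle⟩ := exists_word_ge_mpPow_mpPencil A B θ l p p
  refine hle.trans ?_
  cases k with
  | zero =>
    have hj : j = l := by simpa using hsum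
    rw [mpChain_zero_cons, mpMulM_mpId, hj, Nat.cast_zero, zero_mul, neg_zero, WithBot.coe_zero,
      zero_add]
    exact (Finset.le_sup (f := fun i => mpPow B l i i) (Finset.mem_univ p)).trans
      ((Finset.le_sup (f := fun m => mpTr (mpPow B m)) hl).trans hB)
  | succ k =>
    obtain ⟨a, b, rfl⟩ : ∃ a' b, a = Fin.snoc a' b :=
      ⟨Fin.init a, a (Fin.last k), (Fin.snoc_init_self a).symm⟩
    have htr : mpMulM (mpPow B j) (mpChain A B (k + 1) (Fin.cons 0 (Fin.snoc a b))) p p ≤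
        mpTr (mpChain A B (k + 1) (Fin.cons 0 (Fin.snoc a (b + j)))) := by
      rw [← mpChain_cons_snoc_mul_mpPow, ← mpTr_mpMulM_comm]
      exact Finset.le_sup (f := fun i => mpMulM _ _ i i) (Finset.mem_univ p)
    refine (add_le_add_right (htr.trans (hchain _ _ (by omega) ?_)) _).trans ?_
    · simp [Fin.sum_univ_castSucc] at hsum ⊢; omega
    · rw [← WithBot.coe_add, neg_add_cancel]

end Pencil

section Theta

variable {n : ℕ}

def mpTheta (A B : Fin n → Fin n → MP) : MP :=
  max (mpLam A)
    ((Finset.Icc 1 (n - 1)).sup fun k =>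
      (Finset.Icc 1 (n - k)).sup fun s =>
        (Finset.Nat.antidiagonalTuple k s).sup fun i =>
          (mpTr (mpChain A B k (Fin.cons 0 i))).map (fun t => t / (k : ℝ)))

lemma map_div_le_coe_iff {a : MP} {k : ℕ} (hk : 1 ≤ k) {c : ℝ} :
    a.map (fun t => t / (k : ℝ)) ≤ (c : MP) ↔ a ≤ ((k * c : ℝ) : MP) := by
  have hk0 : (0 : ℝ) < k := by exact_mod_cast hk
  cases a using WithBot.recBotCoe with
  | bot => simp
  | coe a => simp only [WithBot.map_coe, WithBot.coe_le_coe, div_le_iff₀ hk0, mul_comm]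

variable {A B : Fin n → Fin n → MP}

lemma mpTheta_le_of_isSubeigenvector {c : ℝ} {x : Fin n → ℝ} (hA : IsSubeigenvector A c x)
    (hB : IsSubeigenvector B 0 x) : mpTheta A B ≤ c := by
  refine max_le (Finset.sup_le fun m hm => ?_)
    (Finset.sup_le fun k hk => Finset.sup_le fun s _ => Finset.sup_le fun i _ => ?_)
  · exact (map_div_le_coe_iff (Finset.mem_Icc.1 hm).1).2 (hA.mpPow m).mpTr_le
  · exact (map_div_le_coe_iff (Finset.mem_Icc.1 hk).1).2 (hA.mpChain hB k _).mpTr_le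

lemma mpTheta_le_mpConjForm {x : Fin n → ℝ} (hB : IsSubeigenvector B 0 x) :
    mpTheta A B ≤ mpConjForm A x :=
  WithBot.forall_le_coe_iff_le.1 fun _ hc =>
    mpTheta_le_of_isSubeigenvector (mpConjForm_le_iff.1 hc) hB

lemma mpTr_mpChain_le_of_mpTheta_le {θ : ℝ} (hθ : mpTheta A B ≤ θ) {k : ℕ} (hk : 1 ≤ k)
    (a : Fin k → ℕ) (hkn : k + ∑ s, a s ≤ n) :
    mpTr (mpChain A B k (Fin.cons 0 a)) ≤ ((k * θ : ℝ) : MP) := by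
  rw [← map_div_le_coe_iff hk]
  refine le_trans ?_ hθ
  rcases Nat.eq_zero_or_pos (∑ s, a s) with h0 | hpos
  · have ha : ∀ s, (Fin.cons 0 a : Fin (k + 1) → ℕ) s = 0 :=
      Fin.cases rfl fun s => by simpa using (Finset.sum_eq_zero_iff.1 h0) s (Finset.mem_univ s)
    rw [mpChain_of_forall_eq_zero A B k _ ha]
    exact le_max_of_le_left (Finset.le_sup (f := fun m => (mpTr (mpPow A m)).map
      (fun t => t / (m : ℝ))) (Finset.mem_Icc.2 ⟨hk, by omega⟩))
  · refine le_max_of_le_right (Finset.le_sup_of_le (Finset.mem_Icc.2 ⟨hk, by omega⟩)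
      (Finset.le_sup_of_le (Finset.mem_Icc.2 ⟨hpos, by omega⟩) ?_))
    exact Finset.le_sup (f := fun i => (mpTr (mpChain A B k (Fin.cons 0 i))).map
      (fun t => t / (k : ℝ))) (Finset.Nat.mem_antidiagonalTuple.2 rfl)

end Theta

theorem maxplus_opt_Bxg_general {n : ℕ} (A B : Fin n → Fin n → MP) (g : Fin n → MP)
    (hB : mpTR B ≤ ((0:ℝ) : MP)) (θ : ℝ)
    (hθ : (θ : MP) = max (mpLam A)
        ((Finset.Icc 1 (n-1)).sup fun k =>
          (Finset.Icc 1 (n-k)).sup fun s =>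
            (Finset.Nat.antidiagonalTuple k s).sup fun i =>
              (mpTr (mpChain A B k (Fin.cons 0 i))).map (fun t => t / (k : ℝ)))) :
    (∀ x : Fin n → ℝ,
      (∀ i, max (mpMulV B (fun j => (x j : MP)) i) (g i) ≤ (x i : MP)) →
      (θ : MP) ≤ Finset.univ.sup fun i => Finset.univ.sup fun j =>
        ((-(x i) : ℝ) : MP) + A i j + (x j : MP)) ∧
    (∀ x : Fin n → ℝ,
      ((∀ i, max (mpMulV B (fun j => (x j : MP)) i) (g i) ≤ (x i : MP)) ∧
        (Finset.univ.sup fun i => Finset.univ.sup fun j =>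
          ((-(x i) : ℝ) : MP) + A i j + (x j : MP)) = (θ : MP)) ↔
      (∃ u : Fin n → ℝ, (∀ i, g i ≤ (u i : MP)) ∧
        ∀ i, (x i : MP) =
          mpMulV (mpStar (fun p q => max (((-θ : ℝ) : MP) + A p q) (B p q)))
            (fun j => (u j : MP)) i)) := by
  change (θ : MP) = mpTheta A B at hθ
  have hS : mpTR (mpPencil A B θ) ≤ ((0 : ℝ) : MP) :=
    mpTR_mpPencil_le_zero A B hB fun _ a hk hkn => mpTr_mpChain_le_of_mpTheta_le hθ.ge hk a hkn
  have hlow : ∀ x : Fin n → ℝ, (∀ i, max (mpMulV B (fun j => (x j : MP)) i) (g i) ≤ (x i : MP)) →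
      (θ : MP) ≤ mpConjForm A x :=
    fun x hx => hθ.trans_le (mpTheta_le_mpConjForm (max_mpMulV_le_iff.1 hx).1)
  refine ⟨hlow, fun x => ⟨fun ⟨hfeas, hopt⟩ => ?_, fun ⟨u, hgu, hxu⟩ => ?_⟩⟩
  · obtain ⟨hBx, hgx⟩ := max_mpMulV_le_iff.1 hfeas
    have hSx := isSubeigenvector_mpPencil_iff.2 ⟨mpConjForm_le_iff.1 hopt.le, hBx⟩
    exact ⟨x, hgx, fun i => (mpMulV_mpStar_eq hSx i).symm⟩
  · obtain ⟨hAx, hBx⟩ :=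
      isSubeigenvector_mpPencil_iff.1 (isSubeigenvector_of_eq_mpMulV_mpStar hS hxu)
    have hfeas := max_mpMulV_le_iff.2
      ⟨hBx, fun i => (hgu i).trans ((le_mpMulV_mpStar _ _ i).trans (hxu i).ge)⟩
    exact ⟨hfeas, le_antisymm (mpConjForm_le_iff.2 hAx) (hlow x hfeas)⟩

/-- Solution of minimize x⁻ A x subject to B x ⊕ g ≤ x: the minimum equals
θ = λ ⊕ ⨁_{k=1}^{n-1} ⨁_{1≤i₁+⋯+iₖ≤n-k} tr^{1/k}(A B^{i₁} ⋯ A B^{iₖ}),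
attained exactly at x = (θ⁻¹A ⊕ B)* u for regular u ≥ g. -/
theorem maxplus_opt_Bxg {n : ℕ} (A B : Fin n → Fin n → MP) (g : Fin n → MP)
    (hlam : mpLam A ≠ ⊥) (hB : mpTR B ≤ ((0:ℝ) : MP)) (θ : ℝ)
    (hθ : (θ : MP) = max (mpLam A)
        ((Finset.Icc 1 (n-1)).sup fun k =>
          (Finset.Icc 1 (n-k)).sup fun s =>
            (Finset.Nat.antidiagonalTuple k s).sup fun i =>
              (mpTr (mpChain A B k (Fin.cons 0 i))).map (fun t => t / (k : ℝ)))) :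
    (∀ x : Fin n → ℝ,
      (∀ i, max (mpMulV B (fun j => (x j : MP)) i) (g i) ≤ (x i : MP)) →
      (θ : MP) ≤ Finset.univ.sup fun i => Finset.univ.sup fun j =>
        ((-(x i) : ℝ) : MP) + A i j + (x j : MP)) ∧
    (∀ x : Fin n → ℝ,
      ((∀ i, max (mpMulV B (fun j => (x j : MP)) i) (g i) ≤ (x i : MP)) ∧
        (Finset.univ.sup fun i => Finset.univ.sup fun j =>
          ((-(x i) : ℝ) : MP) + A i j + (x j : MP)) = (θ : MP)) ↔
      (∃ u : Fin n → ℝ, (∀ i, g i ≤ (u i : MP)) ∧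
        ∀ i, (x i : MP) =
          mpMulV (mpStar (fun p q => max (((-θ : ℝ) : MP) + A p q) (B p q)))
            (fun j => (u j : MP)) i)) :=
  maxplus_opt_Bxg_general A B g hB θ hθ
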